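/- arXiv:1703.00043 — 2 statements merged into one kernel-verified Lean document; each statement's English description precedes it below -/
import Mathlib

section
/- Fix t ≥ 1 and 0 ≤ p ≤ 1, set q = (1−p)/2, and for r ≥ 1 let P_0(r) (resp. P_1(r)) be the probability that Ξ_t(r)|_ρ is the identically-0 (resp. identically-1) function under a random p-restriction ρ. Then for every r ≥ 2, writing U = P_1(r−1) and V = P_0(r−1): P_0(r) = q·U·∑_{k=0}^{t−1} (q + p·U)^k + (q + p·U)^t, and P_1(r) = q·V·∑_{k=0}^{t−1} (q + p·V)^k. -/
/-! ## Decision trees -/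

/-- Binary decision trees over a variable index type `ι`.  An internal vertex
`node i t0 t1` queries variable `i`; the `0`-edge leads to `t0`, the `1`-edge to `t1`. -/
inductive DTree (ι : Type) : Type where
  | leaf : Bool → DTree ι
  | node : ι → DTree ι → DTree ι → DTree ι

namespace DTree

variable {ι : Type}

/-- Evaluate a decision tree on an input. -/
def eval : DTree ι → (ι → Bool) → Bool
  | leaf b, _ => b
  | node i t0 t1, x => if x i then t1.eval x else t0.eval x

/-- Depth: the number of edges on the longest root-to-leaf path. -/
def depth : DTree ι → ℕ
  | leaf _ => 0
  | node _ t0 t1 => max t0.depth t1.depth + 1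

/-- Distance from the root to the closest leaf. -/
def minLeafDepth : DTree ι → ℕ
  | leaf _ => 0
  | node _ t0 t1 => min t0.minLeafDepth t1.minLeafDepth + 1

/-- A tree is `t`-clipped if every vertex is within distance `t` of some leaf. -/
def Clipped (t : ℕ) : DTree ι → Prop
  | leaf _ => True
  | node _ t0 t1 =>
      min t0.minLeafDepth t1.minLeafDepth + 1 ≤ t ∧ Clipped t t0 ∧ Clipped t t1

/-- No variable in `seen` (nor any variable already queried above) is queried again:
this captures "no variable appears more than once on any root-to-leaf path". -/
def ReadOnceFrom : List ι → DTree ι → Prop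
  | _, leaf _ => True
  | seen, node i t0 t1 =>
      i ∉ seen ∧ ReadOnceFrom (i :: seen) t0 ∧ ReadOnceFrom (i :: seen) t1

/-- No variable appears more than once on any root-to-leaf path. -/
def ReadOnce (T : DTree ι) : Prop := T.ReadOnceFrom []

/-- `T` computes the boolean function `f`. -/
def Computes (T : DTree ι) (f : (ι → Bool) → Bool) : Prop := ∀ x, T.eval x = f x

/-- The list of all variables labelling internal vertices of the tree. -/
def nodeVars : DTree ι → List ι
  | leaf _ => []
  | node i t0 t1 => i :: (t0.nodeVars ++ t1.nodeVars)

/-- The tree has some leaf labelled `b`. -/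
def HasLeaf (b : Bool) : DTree ι → Prop
  | leaf c => c = b
  | node _ t0 t1 => HasLeaf b t0 ∨ HasLeaf b t1

/-- From every internal vertex there is a path to a leaf labelled 0 (`false`)
and a path to a leaf labelled 1 (`true`). -/
def EverySplit : DTree ι → Prop
  | leaf _ => True
  | node _ t0 t1 =>
      (HasLeaf true t0 ∨ HasLeaf true t1) ∧ (HasLeaf false t0 ∨ HasLeaf false t1) ∧
        EverySplit t0 ∧ EverySplit t1

/-- Variable `y` labels some internal vertex at distance `d` (edges) from the root. -/
def OccursAt (y : ι) : ℕ → DTree ι → Prop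
  | _, leaf _ => False
  | 0, node i _ _ => i = y
  | d + 1, node _ t0 t1 => OccursAt y d t0 ∨ OccursAt y d t1

end DTree

/-- `DTdepth f` is the minimum depth of a decision tree computing `f`. -/
noncomputable def DTdepth {ι : Type} (f : (ι → Bool) → Bool) : ℕ :=
  sInf {d | ∃ T : DTree ι, T.ReadOnce ∧ T.Computes f ∧ T.depth ≤ d}

/-! ## Restrictions -/

/-- The function obtained by fixing each variable `i` with `ρ i = some b` to `b`
(variables with `ρ i = none`, i.e. assigned `*`, are left free). -/
def restrictFun {ι : Type} (f : (ι → Bool) → Bool) (ρ : ι → Option Bool) :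
    (ι → Bool) → Bool :=
  fun x => f (fun i => (ρ i).getD (x i))

open Classical in
/-- The probability of the event `E` under a random `p`-restriction: each variable
independently gets `*` (i.e. `none`) with probability `p`, and each of the values
`0`, `1` with probability `(1-p)/2`. -/
noncomputable def restrProb {ι : Type} [Fintype ι] [DecidableEq ι] (p : ℝ)
    (E : (ι → Option Bool) → Prop) : ℝ :=
  ∑ ρ : ι → Option Bool,
    (if E ρ then ∏ i : ι, (if ρ i = none then p else (1 - p) / 2) else 0)

/-! ## Tree tribes -/

/-- The variable index type of the complete `t`-clipped tree `W_t(r)` on `r` levels: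
the first block `v_1, …, v_t`, plus, for each `k < t`, a fresh copy of the variables
of `W_t(r-1)` hanging off the 1-edge of `v_{k+1}`. -/
def XiVars (t : ℕ) : ℕ → Type
  | 0 => Empty
  | r + 1 => Fin t ⊕ (Fin t × XiVars t r)

instance XiVars.instFintype (t : ℕ) : ∀ r, Fintype (XiVars t r)
  | 0 => inferInstanceAs (Fintype Empty)
  | r + 1 =>
      letI := XiVars.instFintype t r
      inferInstanceAs (Fintype (Fin t ⊕ (Fin t × XiVars t r)))

instance XiVars.instDecidableEq (t : ℕ) : ∀ r, DecidableEq (XiVars t r)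
  | 0 => inferInstanceAs (DecidableEq Empty)
  | r + 1 =>
      letI := XiVars.instDecidableEq t r
      inferInstanceAs (DecidableEq (Fin t ⊕ (Fin t × XiVars t r)))

/-- The `t`-clipped xor tree tribe `Ξ_t(r)`: the function computed by `W_t(r)` with
each leaf labelled by the parity of the edge labels on its root-to-leaf path.
Following the 0-edges `v_1 → v_2 → ⋯` until the first variable with value 1 (if any),
whose 1-edge leads to a fresh copy computing the negation of `Ξ_t(r-1)`. -/
def Xi (t : ℕ) : ∀ r, (XiVars t r → Bool) → Bool
  | 0, _ => false
  | r + 1, x =>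
      match (List.finRange t).find? (fun i => x (Sum.inl i)) with
      | none => false
      | some k => ! Xi t r (fun v => x (Sum.inr (k, v)))

namespace XiVars

/-- The list of 1-branch positions (0-indexed within each block) taken on the path
from the root to the block containing the given variable. -/
def branches {t : ℕ} : ∀ {r : ℕ}, XiVars t r → List (Fin t)
  | 0, v => nomatch v
  | _ + 1, Sum.inl _ => []
  | _ + 1, Sum.inr (k, w) => k :: branches w

/-- The (0-indexed) position of the variable within its block. -/
def pos {t : ℕ} : ∀ {r : ℕ}, XiVars t r → Fin t
  | 0, v => nomatch v
  | _ + 1, Sum.inl i => i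
  | _ + 1, Sum.inr (_, w) => pos w

/-- The level of a variable: the recursive step at which it was added (level 1 is the
outermost block). -/
def level {t r : ℕ} (v : XiVars t r) : ℕ := (branches v).length + 1

/-- The distance (number of edges) from the root of `W_t(r)` to the vertex of `v`. -/
def rootDist {t r : ℕ} (v : XiVars t r) : ℕ :=
  ((branches v).map (fun b => (b : ℕ) + 1)).sum + (pos v : ℕ)

/-- The distance from the vertex of `v` to the closest leaf of `W_t(r)`. -/
def leafDist {t r : ℕ} (v : XiVars t r) : ℕ :=
  min (t - (pos v : ℕ)) (1 + min t (r - level v))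

/-- A root-to-leaf path of `W_t(r)` is determined by the list `L` of 1-branch positions
it takes (with `L.length ≤ r`); `v.onPath L` says the vertex of `v` lies on that path. -/
def onPath {t r : ℕ} (v : XiVars t r) (L : List (Fin t)) : Prop :=
  branches v = L ∨
    (branches v <+: L ∧ branches v ≠ L ∧
      ∃ b : Fin t, L[(branches v).length]? = some b ∧ pos v ≤ b)

end XiVars

/-- For `t = 1`, `Ξ_1(n)` is computed by a path on `n` variables: vertex `x_i` has a
0-edge to a leaf and a 1-edge to `x_{i+1}`, leaves labelled by the parity of the edge
labels from the root. -/
def Xi1 : ∀ n, (Fin n → Bool) → Bool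
  | 0, _ => false
  | n + 1, x => if x 0 then ! Xi1 n (fun i => x i.succ) else false

/-! ## Fourier coefficients -/

/-- The Fourier coefficient `f̂_S` of a boolean function, viewed as a function
`{−1,1}^n → {−1,1}` via the identification `false ↔ +1`, `true ↔ −1`:
`f̂_S = E_x[f(x) ∏_{i ∈ S} x_i]` over a uniformly random input. -/
noncomputable def fourierCoeffB {ι : Type} [Fintype ι] [DecidableEq ι]
    (f : (ι → Bool) → Bool) (S : Finset ι) : ℝ :=
  (∑ x : ι → Bool,
      (if f x then (-1 : ℝ) else 1) * ∏ i ∈ S, (if x i then (-1 : ℝ) else 1)) /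
    2 ^ Fintype.card ι

/-- The `i`-th Jacobsthal number `J_i = (2^i − (−1)^i)/3`, as a real number. -/
noncomputable def jacobsthal (i : ℕ) : ℝ := (2 ^ i - (-1) ^ i) / 3

/-- The parity (mod-2 sum) of all the bits of `x`. -/
def parityBool {ι : Type} [Fintype ι] [DecidableEq ι] (x : ι → Bool) : Bool :=
  decide ((Finset.univ.filter fun i => x i = true).card % 2 = 1)

/-! ## The probabilities `P_0(r)`, `P_1(r)` and `γ_d(r)` -/

/-- `P_0(r)`: the probability that `Ξ_t(r)` restricted by a random `p`-restriction is
the identically-`0` function. -/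
noncomputable def Pzero (t : ℕ) (p : ℝ) (r : ℕ) : ℝ :=
  restrProb p (fun ρ : XiVars t r → Option Bool => ∀ x, restrictFun (Xi t r) ρ x = false)

/-- `P_1(r)`: the probability that `Ξ_t(r)` restricted by a random `p`-restriction is
the identically-`1` function. -/
noncomputable def Pone (t : ℕ) (p : ℝ) (r : ℕ) : ℝ :=
  restrProb p (fun ρ : XiVars t r → Option Bool => ∀ x, restrictFun (Xi t r) ρ x = true)

/-- `γ_d(r) = Pr_ρ[DT_depth(Ξ_t(r)|_ρ) ≥ d]` for a random `p`-restriction `ρ`. -/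
noncomputable def gammaDT (t : ℕ) (p : ℝ) (d r : ℕ) : ℝ :=
  restrProb p (fun ρ : XiVars t r → Option Bool => d ≤ DTdepth (restrictFun (Xi t r) ρ))

/-! ## The polynomial sequences `P_0(r), P_1(r) ∈ ℝ[p]` -/

/-- The polynomial `q = (1 − p)/2 ∈ ℝ[p]`. -/
noncomputable def qP : Polynomial ℝ := Polynomial.C (1 / 2) * (1 - Polynomial.X)

/-- The pair of polynomials `(P_0(r), P_1(r)) ∈ ℝ[p] × ℝ[p]`, defined by
`P_0(1) = q^t`, `P_1(1) = 1 − (1−q)^t`, and for `r ≥ 2`, with `U = P_1(r−1)` and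
`V = P_0(r−1)`: `P_0(r) = q·U·∑_{k=0}^{t−1}(q+pU)^k + (q+pU)^t` and
`P_1(r) = q·V·∑_{k=0}^{t−1}(q+pV)^k`.  (The value at `r = 0` is junk.) -/
noncomputable def PP (t : ℕ) : ℕ → Polynomial ℝ × Polynomial ℝ
  | 0 => (1, 0)
  | 1 => (qP ^ t, 1 - (1 - qP) ^ t)
  | r + 2 =>
      (qP * (PP t (r + 1)).2 *
          (∑ k ∈ Finset.range t, (qP + Polynomial.X * (PP t (r + 1)).2) ^ k) +
        (qP + Polynomial.X * (PP t (r + 1)).2) ^ t,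
       qP * (PP t (r + 1)).1 *
          (∑ k ∈ Finset.range t, (qP + Polynomial.X * (PP t (r + 1)).1) ^ k))

/-- The polynomial `P_0(r) ∈ ℝ[p]`. -/
noncomputable def P0poly (t r : ℕ) : Polynomial ℝ := (PP t r).1

/-- The polynomial `P_1(r) ∈ ℝ[p]`. -/
noncomputable def P1poly (t r : ℕ) : Polynomial ℝ := (PP t r).2

/-!
Condition on the restriction `a` of the first block `v_1, …, v_t`. The value of `Ξ_t(r)` is
the negation of the copy of `Ξ_t(r-1)` hanging off the first block variable set to `1`, or `0`
if there is none. Hence `Ξ_t(r)|_ρ ≡ b` iff every copy that some completion of `a` routes to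
is `≡ ¬b`, and `b = 0` in case `a` fixes no block variable to `1`. The copies are restricted
independently, so given `a` the probability is a product of factors `P_{¬b}(r-1)`; summing
over `a` one variable at a time gives a first-order linear recursion in the block length,
solved by the geometric sum.
-/

open Finset

section RestrictionProbability

variable {ι κ : Type} [Fintype ι] [Fintype κ] (p : ℝ)

noncomputable def restrWeight (ρ : ι → Option Bool) : ℝ :=
  ∏ i, if ρ i = none then p else (1 - p) / 2

theorem restrWeight_sum_elim (a : ι → Option Bool) (τ : κ → Option Bool) :
    restrWeight p (Sum.elim a τ) = restrWeight p a * restrWeight p τ :=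
  Fintype.prod_sum_type _

variable [DecidableEq ι] [DecidableEq κ]

open Classical in
theorem restrProb_eq_sum (E : (ι → Option Bool) → Prop) :
    restrProb p E = ∑ ρ, if E ρ then restrWeight p ρ else 0 := rfl

theorem sum_restrWeight : ∑ ρ : ι → Option Bool, restrWeight p ρ = 1 := by
  unfold restrWeight
  rw [← Fintype.prod_sum (fun _ o => if o = none then p else (1 - p) / 2)]
  refine prod_eq_one fun _ _ => ?_
  simp only [Fintype.sum_option, Fintype.sum_bool, if_pos, reduceCtorEq, if_false]
  ring

theorem restrProb_true : restrProb p (fun _ : ι → Option Bool => True) = 1 := by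
  simp [restrProb_eq_sum, sum_restrWeight]

theorem restrProb_const_and (P : Prop) [Decidable P] (E : (ι → Option Bool) → Prop) :
    restrProb p (fun ρ => P ∧ E ρ) = if P then restrProb p E else 0 := by
  by_cases hP : P <;> simp [hP, restrProb_eq_sum]

theorem restrProb_const_imp (P : Prop) [Decidable P] (E : (ι → Option Bool) → Prop) :
    restrProb p (fun ρ => P → E ρ) = if P then restrProb p E else 1 := by
  by_cases hP : P <;> simp [hP, restrProb_true]

theorem restrProb_sum_type (E : (ι ⊕ κ → Option Bool) → Prop) :
    restrProb p E = ∑ a, restrWeight p a * restrProb p (fun τ => E (Sum.elim a τ)) := by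
  classical
  rw [restrProb_eq_sum, ← (Equiv.sumArrowEquivProdArrow ι κ (Option Bool)).symm.sum_comp,
    Fintype.sum_prod_type]
  refine sum_congr rfl fun a _ => ?_
  simp only [restrProb_eq_sum, mul_sum, mul_ite, mul_zero]
  refine sum_congr rfl fun τ _ => ?_
  simp [Equiv.sumArrowEquivProdArrow, restrWeight_sum_elim]

theorem restrProb_forall_prod (E : κ → (ι → Option Bool) → Prop) :
    restrProb p (fun ρ : κ × ι → Option Bool => ∀ k, E k (fun i => ρ (k, i))) =
      ∏ k, restrProb p (E k) := by
  classical
  rw [restrProb_eq_sum, ← (Equiv.curry κ ι (Option Bool)).symm.sum_comp]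
  simp only [restrProb_eq_sum, Fintype.prod_sum]
  refine sum_congr rfl fun σ _ => ?_
  rw [prod_ite_zero]
  simp only [mem_univ, true_implies]
  congr 1
  exact Fintype.prod_prod_type _

end RestrictionProbability

theorem Option.getD_eq_of_ne_some_not {o : Option Bool} {b : Bool} (h : o ≠ some !b) :
    o.getD b = b := by
  rcases o with _ | c
  · rfl
  · cases b <;> cases c <;> simp_all

theorem Option.ne_some_not_of_getD_eq {o : Option Bool} {x b : Bool} (h : o.getD x = b) :
    o ≠ some !b := by
  rintro rfl
  cases b <;> simp_all

theorem List.find?_finRange_eq_some_iff {t : ℕ} (f : Fin t → Bool) (k : Fin t) :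
    (List.finRange t).find? f = some k ↔ f k = true ∧ ∀ j < k, f j = false := by
  rw [List.find?_eq_some_iff_getElem]
  simp only [List.length_finRange, List.getElem_finRange, Fin.cast_mk, Bool.not_eq_true']
  constructor
  · rintro ⟨hk, i, hi, rfl, hlt⟩
    exact ⟨hk, fun j hj => hlt j hj⟩
  · rintro ⟨hk, hlt⟩
    exact ⟨hk, k, k.isLt, rfl, fun j hj => hlt ⟨j, by omega⟩ hj⟩

section TreeTribe

variable {t n : ℕ}

/-- Some completion of the block restriction `a` sets `v_{k+1}`, and no earlier block
variable, to `1`. -/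
def BranchReachable (a : Fin t → Option Bool) (k : Fin t) : Prop :=
  a k ≠ some false ∧ ∀ j < k, a j ≠ some true

instance (a : Fin t → Option Bool) (k : Fin t) : Decidable (BranchReachable a k) := by
  unfold BranchReachable; infer_instance

theorem Xi_succ_of_find?_eq_some (x : XiVars t (n + 1) → Bool) {k : Fin t}
    (h : (List.finRange t).find? (fun i => x (.inl i)) = some k) :
    Xi t (n + 1) x = !Xi t n (fun v => x (.inr (k, v))) := by
  simp only [Xi, h]

theorem Xi_succ_of_find?_eq_none (x : XiVars t (n + 1) → Bool)
    (h : (List.finRange t).find? (fun i => x (.inl i)) = none) :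
    Xi t (n + 1) x = false := by
  simp only [Xi, h]

theorem restrictFun_Xi_succ_eq_const_iff (a : Fin t → Option Bool)
    (τ : Fin t × XiVars t n → Option Bool) (b : Bool) :
    (∀ x, restrictFun (Xi t (n + 1)) (Sum.elim a τ) x = b) ↔
      ((∀ j, a j ≠ some true) → b = false) ∧
        ∀ k, BranchReachable a k → ∀ z, restrictFun (Xi t n) (fun v => τ (k, v)) z = !b := by
  constructor
  · intro H
    refine ⟨fun hno => ?_, fun k hk z => ?_⟩
    · have hfind : (List.finRange t).find? (fun i => (a i).getD false) = none :=
        List.find?_eq_none.2 fun j _ => by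
          simp [Option.getD_eq_of_ne_some_not (b := false) (hno j)]
      exact (H fun _ => false).symm.trans (Xi_succ_of_find?_eq_none _ hfind)
    · have hfind : (List.finRange t).find? (fun i => (a i).getD (decide (i = k))) = some k := by
        refine (List.find?_finRange_eq_some_iff _ _).2 ⟨?_, fun j hj => ?_⟩
        · simpa using Option.getD_eq_of_ne_some_not hk.1
        · simpa [hj.ne] using Option.getD_eq_of_ne_some_not (hk.2 j hj)
      have := (Xi_succ_of_find?_eq_some _ hfind).symm.trans
        (H (Sum.elim (fun j => decide (j = k)) (fun q => z q.2)))
      rw [← this, Bool.not_not]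
      rfl
  · rintro ⟨hfall, hbranch⟩ x
    rcases hfind : (List.finRange t).find? (fun i => (a i).getD (x (.inl i))) with _ | k
    · refine (Xi_succ_of_find?_eq_none _ hfind).trans (hfall fun j => ?_).symm
      exact Option.ne_some_not_of_getD_eq
        (Bool.eq_false_iff.2 (List.find?_eq_none.1 hfind _ (List.mem_finRange j)))
    · obtain ⟨hk, hlt⟩ := (List.find?_finRange_eq_some_iff _ _).1 hfind
      have hreach : BranchReachable a k :=
        ⟨Option.ne_some_not_of_getD_eq hk, fun j hj => Option.ne_some_not_of_getD_eq (hlt j hj)⟩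
      refine (Xi_succ_of_find?_eq_some _ hfind).trans ?_
      change (!restrictFun (Xi t n) (fun v => τ (k, v)) (fun v => x (.inr (k, v)))) = b
      rw [hbranch k hreach, Bool.not_not]

end TreeTribe

section Block

variable {m : ℕ}

theorem restrWeight_cons (p : ℝ) (o : Option Bool) (a : Fin m → Option Bool) :
    restrWeight p (Fin.cons o a : Fin (m + 1) → Option Bool) =
      (if o = none then p else (1 - p) / 2) * restrWeight p a :=
  Fin.prod_univ_succ _

theorem branchReachable_cons_zero (o : Option Bool) (a : Fin m → Option Bool) :
    BranchReachable (Fin.cons o a : Fin (m + 1) → Option Bool) 0 ↔ o ≠ some false := by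
  simp [BranchReachable]

theorem branchReachable_cons_succ (o : Option Bool) (a : Fin m → Option Bool) (j : Fin m) :
    BranchReachable (Fin.cons o a : Fin (m + 1) → Option Bool) j.succ ↔
      o ≠ some true ∧ BranchReachable a j := by
  simp only [BranchReachable, Fin.forall_fin_succ, Fin.cons_succ, Fin.cons_zero, Fin.succ_pos,
    Fin.succ_lt_succ_iff, forall_const]
  tauto

/-- `c` is the weight of the exit through the leaf `v_{t+1}`. -/
noncomputable def blockSum (p U c : ℝ) (m : ℕ) : ℝ :=
  ∑ a : Fin m → Option Bool, restrWeight p a *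
    ((if ∀ j, a j ≠ some true then c else 1) * ∏ k, if BranchReachable a k then U else 1)

theorem blockSum_zero (p U c : ℝ) : blockSum p U c 0 = c := by
  simp [blockSum, restrWeight]

theorem blockSum_succ (p U c : ℝ) (m : ℕ) :
    blockSum p U c (m + 1) = ((1 - p) / 2 + p * U) * blockSum p U c m + (1 - p) / 2 * U := by
  rw [blockSum, ← (Fin.consEquiv fun _ => Option Bool).sum_comp, Fintype.sum_prod_type,
    Fintype.sum_option, Fintype.sum_bool]
  simp only [Fin.consEquiv, Equiv.coe_fn_mk, restrWeight_cons, ↓reduceIte, ne_eq,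
    Fin.forall_fin_succ, Fin.cons_zero, reduceCtorEq, not_false_eq_true, Fin.cons_succ, true_and,
    Fin.prod_univ_succ, branchReachable_cons_zero, branchReachable_cons_succ, ite_mul, one_mul,
    mul_ite, not_true_eq_false, false_and, Option.some.injEq, Bool.true_eq_false, prod_const_one,
    mul_one, Bool.false_eq_true]
  have hconst :
      (1 - p) / 2 * U = ∑ a : Fin m → Option Bool, (1 - p) / 2 * U * restrWeight p a := by
    rw [← mul_sum, sum_restrWeight, mul_one]
  rw [blockSum, hconst, mul_sum, ← sum_add_distrib, ← sum_add_distrib, ← sum_add_distrib]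
  refine sum_congr rfl fun a _ => ?_
  split_ifs <;> ring

theorem blockSum_eq (p U c : ℝ) (m : ℕ) :
    blockSum p U c m = ((1 - p) / 2 + p * U) ^ m * c +
      (1 - p) / 2 * U * ∑ k ∈ range m, ((1 - p) / 2 + p * U) ^ k := by
  induction m with
  | zero => simp [blockSum_zero]
  | succ m ih =>
    rw [blockSum_succ, ih, geom_sum_succ]
    ring

end Block

noncomputable def xiConstProb (t : ℕ) (p : ℝ) (r : ℕ) (b : Bool) : ℝ :=
  restrProb p (fun ρ : XiVars t r → Option Bool => ∀ x, restrictFun (Xi t r) ρ x = b)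

theorem Pzero_eq (t : ℕ) (p : ℝ) (r : ℕ) : Pzero t p r = xiConstProb t p r false := rfl

theorem Pone_eq (t : ℕ) (p : ℝ) (r : ℕ) : Pone t p r = xiConstProb t p r true := rfl

theorem xiConstProb_succ (t : ℕ) (p : ℝ) (n : ℕ) (b : Bool) :
    xiConstProb t p (n + 1) b = blockSum p (xiConstProb t p n !b) (if b then 0 else 1) t := by
  change restrProb (ι := Fin t ⊕ (Fin t × XiVars t n)) p
    (fun ρ => ∀ x, restrictFun (Xi t (n + 1)) ρ x = b) = _
  rw [restrProb_sum_type]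
  refine sum_congr rfl fun a _ => ?_
  simp only [restrictFun_Xi_succ_eq_const_iff, restrProb_const_and]
  rw [restrProb_forall_prod
    (E := fun k σ => BranchReachable a k → ∀ z, restrictFun (Xi t n) σ z = !b)]
  simp only [restrProb_const_imp]
  congr 1
  by_cases h : ∀ j, a j ≠ some true <;> cases b <;> simp [h, xiConstProb]

theorem xi_prob_recurrence_general (t : ℕ) (p : ℝ)
    (r : ℕ) (hr : 2 ≤ r) :
    Pzero t p r =
        ((1 - p) / 2) * Pone t p (r - 1) *
            (∑ k ∈ Finset.range t, ((1 - p) / 2 + p * Pone t p (r - 1)) ^ k) +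
          ((1 - p) / 2 + p * Pone t p (r - 1)) ^ t ∧
      Pone t p r =
        ((1 - p) / 2) * Pzero t p (r - 1) *
          (∑ k ∈ Finset.range t, ((1 - p) / 2 + p * Pzero t p (r - 1)) ^ k) := by
  obtain ⟨n, rfl⟩ : ∃ n, r = n + 1 := ⟨r - 1, by omega⟩
  simp only [Pzero_eq, Pone_eq, xiConstProb_succ, blockSum_eq, add_tsub_cancel_right,
    Bool.not_false, Bool.not_true, Bool.false_eq_true, ↓reduceIte]
  constructor <;> ring

/-- the probabilities `P_0(r), P_1(r)` that `Ξ_t(r)|_ρ` is identically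
`0` resp. `1` satisfy, for `r ≥ 2`, with `q = (1−p)/2`, `U = P_1(r−1)`, `V = P_0(r−1)`:
`P_0(r) = qU·∑_{k=0}^{t−1}(q+pU)^k + (q+pU)^t` and `P_1(r) = qV·∑_{k=0}^{t−1}(q+pV)^k`. -/
theorem xi_prob_recurrence (t : ℕ) (ht : 1 ≤ t) (p : ℝ) (hp0 : 0 ≤ p) (hp1 : p ≤ 1)
    (r : ℕ) (hr : 2 ≤ r) :
    Pzero t p r =
        ((1 - p) / 2) * Pone t p (r - 1) *
            (∑ k ∈ Finset.range t, ((1 - p) / 2 + p * Pone t p (r - 1)) ^ k) +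
          ((1 - p) / 2 + p * Pone t p (r - 1)) ^ t ∧
      Pone t p r =
        ((1 - p) / 2) * Pzero t p (r - 1) *
          (∑ k ∈ Finset.range t, ((1 - p) / 2 + p * Pzero t p (r - 1)) ^ k) :=
  xi_prob_recurrence_general t p r hr
end

section
/- Fix an integer t ≥ 1 and define the polynomial sequences P_0(r), P_1(r) ∈ ℝ[p] as in the context. Then for every r ≥ 1: −2·2^t ≤ [p]P_0(r) ≤ 0 and −2·2^t ≤ [p]P_1(r) ≤ 0. -/
/-! Only the constant and linear coefficients at `p = 0` matter, and they propagate through the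
recursion by explicit formulas because `q + pU` has constant term `1/2` whatever `U` is. By
induction on `r`, the constant coefficients stay in `[0, 1]` and the linear ones in `[-2·2ᵗ, 0]`.
In the inductive step the old linear coefficient gets multiplied by `1 - 2⁻ᵗ`, which lifts the
lower bound `-2·2ᵗ` by exactly `2`; that absorbs the remaining terms, which are bounded
independently of `t`. -/

open Polynomial Finset Set

namespace Polynomial

variable {R : Type*} [CommSemiring R]

theorem coeff_one_mul (P Q : R[X]) :
    (P * Q).coeff 1 = P.coeff 1 * Q.coeff 0 + P.coeff 0 * Q.coeff 1 := by
  rw [← coeff_coe, coe_mul, PowerSeries.coeff_one_mul]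
  simp only [coeff_coe, constantCoeff_coe, mul_comm]

theorem coeff_zero_pow (n : ℕ) (P : R[X]) : (P ^ n).coeff 0 = P.coeff 0 ^ n := by
  simp [coeff_zero_eq_eval_zero]

theorem coeff_one_pow (n : ℕ) (P : R[X]) :
    (P ^ n).coeff 1 = n * P.coeff 1 * P.coeff 0 ^ (n - 1) := by
  rw [← coeff_coe, coe_pow, PowerSeries.coeff_one_pow]
  simp only [coeff_coe, constantCoeff_coe]

end Polynomial

theorem natCast_mul_half_pow_pred (t : ℕ) :
    (t : ℝ) * (1 / 2) ^ (t - 1) = 2 * (t * (1 / 2) ^ t) := by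
  cases t with
  | zero => simp
  | succ t => rw [Nat.add_sub_cancel, pow_succ]; ring

theorem sum_range_half_pow (t : ℕ) :
    ∑ k ∈ range t, (1 / 2 : ℝ) ^ k = 2 - 2 * (1 / 2) ^ t := by
  induction t with
  | zero => norm_num
  | succ t ih => rw [sum_range_succ, ih, pow_succ]; ring

theorem sum_range_mul_half_pow_pred (t : ℕ) :
    ∑ k ∈ range t, (k : ℝ) * (1 / 2) ^ (k - 1) = 4 - 4 * (t + 1) * (1 / 2) ^ t := by
  induction t with
  | zero => norm_num
  | succ t ih =>
    rw [sum_range_succ, ih, natCast_mul_half_pow_pred, pow_succ]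
    push_cast
    ring

theorem qP_coeff_zero : qP.coeff 0 = 1 / 2 := by simp [qP]

theorem qP_coeff_one : qP.coeff 1 = -(1 / 2) := by simp [qP, coeff_one]

theorem coeff_zero_qP_add_X_mul (U : ℝ[X]) : (qP + X * U).coeff 0 = 1 / 2 := by
  simp [qP_coeff_zero]

theorem coeff_one_qP_add_X_mul (U : ℝ[X]) :
    (qP + X * U).coeff 1 = U.coeff 0 - 1 / 2 := by
  simp [qP_coeff_one, coeff_X_mul]; ring

noncomputable def branchPoly (t : ℕ) (U : ℝ[X]) : ℝ[X] :=
  qP * U * ∑ k ∈ range t, (qP + X * U) ^ k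

theorem PP_add_two (t r : ℕ) :
    PP t (r + 2) =
      (branchPoly t (PP t (r + 1)).2 + (qP + X * (PP t (r + 1)).2) ^ t,
        branchPoly t (PP t (r + 1)).1) := rfl

section Coefficients

variable (t : ℕ) (U : ℝ[X])

theorem branchPoly_coeff_zero :
    (branchPoly t U).coeff 0 = (1 - (1 / 2) ^ t) * U.coeff 0 := by
  rw [branchPoly, mul_coeff_zero, mul_coeff_zero, finsetSum_coeff]
  simp only [coeff_zero_pow, coeff_zero_qP_add_X_mul, sum_range_half_pow, qP_coeff_zero]
  ring

theorem branchPoly_coeff_one :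
    (branchPoly t U).coeff 1 =
      (1 - (1 / 2) ^ t) * (U.coeff 1 - U.coeff 0) +
        (2 - 2 * (1 / 2) ^ t - 2 * (t * (1 / 2) ^ t)) * U.coeff 0 * (U.coeff 0 - 1 / 2) := by
  rw [branchPoly, coeff_one_mul, coeff_one_mul, mul_coeff_zero, finsetSum_coeff,
    finsetSum_coeff]
  simp only [coeff_zero_pow, coeff_one_pow, coeff_zero_qP_add_X_mul, coeff_one_qP_add_X_mul,
    qP_coeff_zero, qP_coeff_one, sum_range_half_pow]
  simp only [mul_right_comm _ (U.coeff 0 - 1 / 2), ← sum_mul, sum_range_mul_half_pow_pred]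
  ring

theorem coeff_zero_qP_add_X_mul_pow : ((qP + X * U) ^ t).coeff 0 = (1 / 2) ^ t := by
  rw [coeff_zero_pow, coeff_zero_qP_add_X_mul]

theorem coeff_one_qP_add_X_mul_pow :
    ((qP + X * U) ^ t).coeff 1 = 2 * (t * (1 / 2) ^ t) * (U.coeff 0 - 1 / 2) := by
  rw [coeff_one_pow, coeff_zero_qP_add_X_mul, coeff_one_qP_add_X_mul, mul_right_comm,
    natCast_mul_half_pow_pred]

end Coefficients

/-! With `E = 2⁻ᵗ`, `s = t·2⁻ᵗ` and `L = -2·2ᵗ`, these are the constant and linear coefficients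
of `branchPoly t U` and of `branchPoly t U + (q + pU)ᵗ` in terms of `a = U(0)` and `v = [p]U`. -/
section JetStep

variable {E s L a v : ℝ}

theorem branch_jet_mem_Icc (hE : 0 ≤ E) (hs : 0 ≤ s) (hEs : E + s ≤ 1) (hLE : L * E = -2)
    (ha : a ∈ Icc (0 : ℝ) 1) (hv : v ∈ Icc L 0) :
    (1 - E) * a ∈ Icc (0 : ℝ) 1 ∧
      (1 - E) * (v - a) + (2 - 2 * E - 2 * s) * a * (a - 1 / 2) ∈ Icc L 0 := by
  obtain ⟨ha0, ha1⟩ := ha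
  obtain ⟨hLv, hv0⟩ := hv
  have hE1 : 0 ≤ 1 - E := by linarith
  have hc : 0 ≤ 2 - 2 * E - 2 * s := by linarith
  refine ⟨⟨mul_nonneg hE1 ha0, by nlinarith⟩, ?_, ?_⟩
  · nlinarith [mul_nonneg hE1 (sub_nonneg.2 hLv), mul_nonneg hc (sq_nonneg (a - 1 / 4)),
      mul_nonneg hE1 (sub_nonneg.2 ha1), mul_nonneg hE ha0]
  · nlinarith [mul_nonneg hE1 (neg_nonneg.2 hv0), mul_nonneg (mul_nonneg hc ha0) (sub_nonneg.2 ha1),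
      mul_nonneg ha0 hs]

theorem branch_add_pow_jet_mem_Icc (hE : 0 ≤ E) (hs : 0 ≤ s) (hEs : E + s ≤ 1)
    (hLE : L * E = -2) (ha : a ∈ Icc (0 : ℝ) 1) (hv : v ∈ Icc L 0) :
    (1 - E) * a + E ∈ Icc (0 : ℝ) 1 ∧
      (1 - E) * (v - a) + (2 - 2 * E - 2 * s) * a * (a - 1 / 2) + 2 * s * (a - 1 / 2) ∈
        Icc L 0 := by
  obtain ⟨ha0, ha1⟩ := ha
  obtain ⟨hLv, hv0⟩ := hv
  have hE1 : 0 ≤ 1 - E := by linarith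
  have hc : 0 ≤ 2 - 2 * E - 2 * s := by linarith
  refine ⟨⟨by nlinarith [mul_nonneg hE1 ha0], by nlinarith [mul_nonneg hE1 (sub_nonneg.2 ha1)]⟩,
    ?_, ?_⟩
  · nlinarith [mul_nonneg hE1 (sub_nonneg.2 hLv), mul_nonneg hc (sq_nonneg (a - 1 / 4)),
      mul_nonneg hE1 (sub_nonneg.2 ha1), mul_nonneg hE ha0, mul_nonneg hs ha0]
  · nlinarith [mul_nonneg hE1 (neg_nonneg.2 hv0), mul_nonneg (mul_nonneg hc ha0) (sub_nonneg.2 ha1),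
      mul_nonneg hs (sub_nonneg.2 ha1)]

end JetStep

theorem half_pow_add_mul_half_pow_le_one (t : ℕ) : (1 / 2 : ℝ) ^ t + t * (1 / 2) ^ t ≤ 1 := by
  have h : ((t + 1 : ℕ) : ℝ) ≤ 2 ^ t := by exact_mod_cast Nat.lt_two_pow_self
  rw [← one_add_mul, one_div_pow, mul_one_div, div_le_one (by positivity)]
  push_cast at h
  linarith

theorem neg_two_mul_two_pow_mul_half_pow (t : ℕ) : (-2 * 2 ^ t : ℝ) * (1 / 2) ^ t = -2 := by
  rw [mul_assoc, ← mul_pow]; norm_num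

def JetBounded (t : ℕ) (P : ℝ[X]) : Prop :=
  P.coeff 0 ∈ Icc (0 : ℝ) 1 ∧ P.coeff 1 ∈ Icc (-2 * 2 ^ t : ℝ) 0

namespace JetBounded

variable {t : ℕ} {U : ℝ[X]}

theorem branchPoly (hU : JetBounded t U) : JetBounded t (branchPoly t U) := by
  rw [JetBounded, branchPoly_coeff_zero, branchPoly_coeff_one]
  exact branch_jet_mem_Icc (by positivity) (by positivity) (half_pow_add_mul_half_pow_le_one t)
    (neg_two_mul_two_pow_mul_half_pow t) hU.1 hU.2

theorem branchPoly_add_pow (hU : JetBounded t U) :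
    JetBounded t (_root_.branchPoly t U + (qP + X * U) ^ t) := by
  rw [JetBounded, coeff_add, coeff_add, branchPoly_coeff_zero, branchPoly_coeff_one,
    coeff_zero_qP_add_X_mul_pow, coeff_one_qP_add_X_mul_pow]
  exact branch_add_pow_jet_mem_Icc (by positivity) (by positivity)
    (half_pow_add_mul_half_pow_le_one t) (neg_two_mul_two_pow_mul_half_pow t) hU.1 hU.2

end JetBounded

theorem one_sub_qP : 1 - qP = qP + X * 1 := by
  have h : (C (1 / 2) : ℝ[X]) * 2 = 1 := by rw [← C_ofNat, ← C_mul]; norm_num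
  rw [qP]
  linear_combination (X - 1) * h

theorem jetBounded_PP_one (t : ℕ) : JetBounded t (PP t 1).1 ∧ JetBounded t (PP t 1).2 := by
  have hE := half_pow_add_mul_half_pow_le_one t
  have hE0 : (0 : ℝ) ≤ (1 / 2) ^ t := by positivity
  have hs : (0 : ℝ) ≤ t * (1 / 2) ^ t := by positivity
  have h2t : (1 : ℝ) ≤ 2 ^ t := one_le_pow₀ (by norm_num)
  have h0 : (PP t 1).1 = (qP + X * 0) ^ t := by rw [mul_zero, add_zero]; rfl
  have h1 : (PP t 1).2 = 1 - (qP + X * 1) ^ t := by rw [← one_sub_qP]; rfl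
  simp only [JetBounded, h0, h1, coeff_sub, coeff_zero_qP_add_X_mul_pow,
    coeff_one_qP_add_X_mul_pow, coeff_zero, coeff_one, one_ne_zero, if_false, if_true]
  refine ⟨⟨⟨hE0, ?_⟩, ?_, ?_⟩, ⟨?_, ?_⟩, ?_, ?_⟩ <;> linarith

theorem jetBounded_PP (t : ℕ) {r : ℕ} (hr : 1 ≤ r) :
    JetBounded t (PP t r).1 ∧ JetBounded t (PP t r).2 := by
  induction r, hr using Nat.le_induction with
  | base => exact jetBounded_PP_one t
  | succ r hr ih =>
    obtain ⟨r, rfl⟩ := Nat.exists_eq_add_of_le' hr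
    rw [PP_add_two]
    exact ⟨ih.2.branchPoly_add_pow, ih.1.branchPoly⟩

theorem ppoly_linear_coeff_bounds_general (t : ℕ) (r : ℕ) (hr : 1 ≤ r) :
    (-2 * 2 ^ t ≤ (P0poly t r).coeff 1 ∧ (P0poly t r).coeff 1 ≤ 0) ∧
      (-2 * 2 ^ t ≤ (P1poly t r).coeff 1 ∧ (P1poly t r).coeff 1 ≤ 0) :=
  ⟨(jetBounded_PP t hr).1.2, (jetBounded_PP t hr).2.2⟩

/-- for every `r ≥ 1`, `−2·2^t ≤ [p]P_0(r) ≤ 0` and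
`−2·2^t ≤ [p]P_1(r) ≤ 0`. -/
theorem ppoly_linear_coeff_bounds (t : ℕ) (ht : 1 ≤ t) (r : ℕ) (hr : 1 ≤ r) :
    (-2 * 2 ^ t ≤ (P0poly t r).coeff 1 ∧ (P0poly t r).coeff 1 ≤ 0) ∧
      (-2 * 2 ^ t ≤ (P1poly t r).coeff 1 ∧ (P1poly t r).coeff 1 ≤ 0) :=
  ppoly_linear_coeff_bounds_general t r hr
end
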